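/- (Proposition 2(3), normalization.) For each n ∈ {0,…,N}, the entries of the Wigner matrix sum to one: ∑_{k=0}^{N} ∑_{l=0}^{N} W(n)_{k,l} = 1. -/

import Mathlib

open Matrix

/-- The Weyl-symmetrized operator `Ĝ_{a,b}(P,Q)`: `1/C(a+b,a)` times the sum over all
subsets `S` of `{1,…,a+b}` of size `a` of the ordered product `X_1 ⋯ X_{a+b}` with
`X_i = P` if `i ∈ S` and `X_i = Q` otherwise. -/
noncomputable def weylG {N : ℕ} (P Q : Matrix (Fin (N + 1)) (Fin (N + 1)) ℂ) (a b : ℕ) :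
    Matrix (Fin (N + 1)) (Fin (N + 1)) ℂ :=
  (((a + b).choose a : ℂ))⁻¹ •
    ∑ S ∈ Finset.univ.filter (fun S : Finset (Fin (a + b)) => S.card = a),
      (List.ofFn fun i : Fin (a + b) => if i ∈ S then P else Q).prod

/-- The matrix `Z(n)` with entries `Z(n)_{a,b} = (Ĝ_{a,b}(P,Q))_{n,n}`, `a,b ∈ {0,…,N}`. -/
noncomputable def zMat {N : ℕ} (P Q : Matrix (Fin (N + 1)) (Fin (N + 1)) ℂ)
    (n : Fin (N + 1)) : Matrix (Fin (N + 1)) (Fin (N + 1)) ℂ :=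
  Matrix.of fun a b : Fin (N + 1) => weylG P Q a.val b.val n n

/-- The Wigner matrix `W(n) = V(p)⁻ᵀ ⬝ Z(n) ⬝ V(q)⁻¹`, where `V(x)` is the Vandermonde
matrix on the spectrum `x` (regarded as a complex matrix). -/
noncomputable def wignerW {N : ℕ} (P Q : Matrix (Fin (N + 1)) (Fin (N + 1)) ℂ)
    (p q : Fin (N + 1) → ℝ) (n : Fin (N + 1)) : Matrix (Fin (N + 1)) (Fin (N + 1)) ℂ :=
  ((Matrix.vandermonde fun k => (p k : ℂ))ᵀ)⁻¹ * zMat P Q n *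
    (Matrix.vandermonde fun l => (q l : ℂ))⁻¹

/-! The first column of a Vandermonde matrix is all ones, so `V⁻¹ *ᵥ 1 = e₀`. Summing all
entries of `W(n) = V(p)⁻ᵀ Z(n) V(q)⁻¹` is `1ᵀ W(n) 1 = e₀ᵀ Z(n) e₀ = (Ĝ_{0,0})_{n,n}`, and
`Ĝ_{0,0}` is the empty product `1`. -/

lemma weylG_zero_zero {N : ℕ} (P Q : Matrix (Fin (N + 1)) (Fin (N + 1)) ℂ) :
    weylG P Q 0 0 = 1 := by
  simp [weylG, Finset.univ_unique, Finset.eq_empty_of_isEmpty]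

namespace Matrix

variable {R : Type*}

theorem sum_sum_mul_mul_apply {k m n l : Type*} [Fintype k] [Fintype m] [Fintype n] [Fintype l]
    [Semiring R] (A : Matrix k m R) (Z : Matrix m n R) (B : Matrix n l R) :
    ∑ i, ∑ j, (A * Z * B) i j = (1 ᵥ* A) ⬝ᵥ (Z *ᵥ (B *ᵥ 1)) := by
  have hsum (M : Matrix k l R) : ∑ i, ∑ j, M i j = 1 ⬝ᵥ (M *ᵥ 1) := by
    simp [mulVec, dotProduct]
  rw [hsum, ← mulVec_mulVec, ← mulVec_mulVec, dotProduct_mulVec]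

theorem vandermonde_mulVec_single_zero [CommRing R] {n : ℕ} (v : Fin (n + 1) → R) :
    vandermonde v *ᵥ Pi.single 0 1 = 1 := by
  ext i
  simp [vandermonde_apply]

theorem vandermonde_inv_mulVec_one {K : Type*} [Field K] {n : ℕ} {v : Fin (n + 1) → K}
    (hv : Function.Injective v) : (vandermonde v)⁻¹ *ᵥ 1 = Pi.single 0 1 := by
  have : Invertible (vandermonde v) :=
    invertibleOfIsUnitDet _ (det_vandermonde_ne_zero_iff.mpr hv).isUnit
  exact inv_mulVec_eq_vec (vandermonde_mulVec_single_zero v).symm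

end Matrix

/-- Proposition 2(3), normalization: the entries of the Wigner matrix sum to one. -/
theorem wignerW_sum_eq_one {N : ℕ}
    (P Q : Matrix (Fin (N + 1)) (Fin (N + 1)) ℂ)
    (p q : Fin (N + 1) → ℝ) (hp : Function.Injective p) (hq : Function.Injective q)
    (n : Fin (N + 1)) :
    ∑ k : Fin (N + 1), ∑ l : Fin (N + 1), wignerW P Q p q n k l = 1 := by
  have hV {x : Fin (N + 1) → ℝ} (hx : Function.Injective x) :
      (vandermonde fun k => (x k : ℂ))⁻¹ *ᵥ 1 = Pi.single 0 1 :=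
    vandermonde_inv_mulVec_one (Complex.ofReal_injective.comp hx)
  rw [wignerW, sum_sum_mul_mul_apply, ← transpose_nonsing_inv, vecMul_transpose, hV hp, hV hq,
    mulVec_single_one, single_one_dotProduct]
  simp [zMat, weylG_zero_zero]
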